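/- For every odd integer k ≥ 19 and every prime D ≥ 7, one has Ψ_k^1(D) < 0.67 and Ψ_k^2(D) < 0.1. -/

import Mathlib

/-- The J-Bessel function `J_ν(x)`, defined for real `ν ≥ 0` and `x > 0` by
`J_ν(x) = (2(x/2)^ν / (Γ(ν+1/2)Γ(1/2))) ∫_0^{π/2} sin(θ)^{2ν} cos(x cos θ) dθ`. -/
noncomputable def besselJ (ν x : ℝ) : ℝ :=
  2 * (x / 2) ^ ν / (Real.Gamma (ν + 1 / 2) * Real.Gamma (1 / 2)) *
    ∫ θ in (0 : ℝ)..(Real.pi / 2), Real.sin θ ^ (2 * ν) * Real.cos (x * Real.cos θ)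

/-- The Kloosterman sum `S(m, n; c) = Σ_{x ∈ (ℤ/cℤ)ˣ} e((mx + n x̄)/c)`. -/
noncomputable def klSum (m n : ℤ) (c : ℕ) : ℂ :=
  ∑ x ∈ Finset.filter (fun x => Nat.Coprime x c) (Finset.range c),
    Complex.exp (2 * Real.pi * Complex.I *
      ((m : ℂ) * (x : ℂ) + (n : ℂ) * ((((x : ZMod c)⁻¹ : ZMod c).val : ℕ) : ℂ)) / (c : ℂ))

/-- The twisted Kloosterman sum `S_χ(m, n; c) = Σ_{x ∈ (ℤ/cℤ)ˣ} χ(x mod D) e((mx + n x̄)/c)`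
for a Dirichlet character `χ` mod `D`. -/
noncomputable def klSumT {D : ℕ} (χ : DirichletCharacter ℂ D) (m n : ℤ) (c : ℕ) : ℂ :=
  ∑ x ∈ Finset.filter (fun x => Nat.Coprime x c) (Finset.range c),
    χ ((x : ℕ) : ZMod D) * Complex.exp (2 * Real.pi * Complex.I *
      ((m : ℂ) * (x : ℂ) + (n : ℂ) * ((((x : ZMod c)⁻¹ : ZMod c).val : ℕ) : ℂ)) / (c : ℂ))

/-- The quadratic Dirichlet character mod a prime `D` (the Legendre symbol `(·/D)`),
with values in `ℂ`. -/
noncomputable def omegaChar (D : ℕ) (hD : D.Prime) : DirichletCharacter ℂ D :=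
  letI : Fact D.Prime := ⟨hD⟩
  (quadraticChar (ZMod D)).ringHomComp (Int.castRingHom ℂ)

/-- `φ_k(m,n) = δ_{m,n} + 2π i^k Σ_{c > 0, D ∣ c} c⁻¹ S_ω(m,n;c) J_{k-1}(4π√(mn)/c)`. -/
noncomputable def phiK (D : ℕ) (χ : DirichletCharacter ℂ D) (k m n : ℕ) : ℂ :=
  (if m = n then 1 else 0) +
    2 * Real.pi * Complex.I ^ k *
      ∑' c : {c : ℕ // 0 < c ∧ D ∣ c},
        ((c : ℕ) : ℂ)⁻¹ * klSumT χ m n c *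
          ((besselJ ((k : ℝ) - 1) (4 * Real.pi * Real.sqrt ((m : ℝ) * n) / ((c : ℕ) : ℝ)) : ℝ) : ℂ)

/-- `Ψ_k^1(D) = 2π D^{-1/2} Σ_{ℓ ≥ 1, D ∤ ℓ} ℓ^{-1/2} σ₀(ℓ) |J_{k-1}(4π/ℓ)|`. -/
noncomputable def Psi1 (k D : ℕ) : ℝ :=
  2 * Real.pi * (D : ℝ) ^ (-(1 / 2) : ℝ) *
    ∑' ℓ : {ℓ : ℕ // 0 < ℓ ∧ ¬ D ∣ ℓ},
      ((ℓ : ℕ) : ℝ) ^ (-(1 / 2) : ℝ) * ((ℓ : ℕ).divisors.card : ℝ) *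
        |besselJ ((k : ℝ) - 1) (4 * Real.pi / ((ℓ : ℕ) : ℝ))|

/-- `Ψ_k^2(D) = 2π Σ_{m ≥ 1} (Dm)^{-1/2} (√D σ₀(Dm) + σ₀(D²m)) |J_{k-1}(4π/(Dm))|`. -/
noncomputable def Psi2 (k D : ℕ) : ℝ :=
  2 * Real.pi *
    ∑' m : ℕ+,
      ((D : ℝ) * (m : ℕ)) ^ (-(1 / 2) : ℝ) *
        (Real.sqrt D * (((D * (m : ℕ)).divisors.card : ℝ)) + ((D ^ 2 * (m : ℕ)).divisors.card : ℝ)) *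
        |besselJ ((k : ℝ) - 1) (4 * Real.pi / ((D : ℝ) * (m : ℕ)))|

/-- The Riemann zeta function at a real argument. -/
noncomputable def zetaR (s : ℝ) : ℝ := (riemannZeta (s : ℂ)).re

/-!
Bounding the integrand of `besselJ` by `1` and evaluating `Γ(n + 1/2)` gives
`|J_n(x)| ≤ x ^ n / (2n - 1)‼`. Since `(4π) ^ n / (2n - 1)‼` decreases once `2n + 1 ≥ 4π`, for
`n = k - 1 ≥ 18` and `x ≥ 1` this yields `|J_{k-1}(4π / x)| ≤ 0.276 / x ^ 18`. Together with
`σ₀(ℓ) ≤ ℓ`, both series are dominated termwise by multiples of `ζ(17) ≤ 1 + 2⁻¹⁵`, so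
`Ψ_k^1(D) ≤ 2π · 0.2761 / √D`, which is below `0.67` once `√D > 2.6`, and
`Ψ_k^2(D) ≤ 2π · 0.5521 / D ^ 16`.
-/

open Real
open scoped Nat

lemma abs_besselJ_le {ν x : ℝ} (hν : 0 ≤ ν) (hx : 0 ≤ x) :
    |besselJ ν x| ≤ (x / 2) ^ ν * √π / Gamma (ν + 1 / 2) := by
  have hI : |∫ θ in (0 : ℝ)..(π / 2), sin θ ^ (2 * ν) * cos (x * cos θ)| ≤ π / 2 := by
    have := intervalIntegral.norm_integral_le_of_norm_le_const (a := 0) (b := π / 2) (C := 1)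
      (f := fun θ => sin θ ^ (2 * ν) * cos (x * cos θ)) fun θ hθ => by
        rw [Set.uIoc_of_le pi_div_two_pos.le] at hθ
        have hsin : 0 ≤ sin θ :=
          sin_nonneg_of_nonneg_of_le_pi hθ.1.le (by linarith [hθ.2, pi_pos])
        rw [norm_mul, norm_of_nonneg (rpow_nonneg hsin _)]
        exact mul_le_one₀ (rpow_le_one hsin (sin_le_one θ) (by linarith)) (norm_nonneg _)
          (abs_cos_le_one _)
    simpa [abs_of_pos pi_div_two_pos] using this
  rw [besselJ, Gamma_one_half_eq, abs_mul, abs_of_nonneg (by positivity)]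
  calc _ ≤ 2 * (x / 2) ^ ν / (Gamma (ν + 1 / 2) * √π) * (π / 2) := by gcongr
    _ = _ := by
      field_simp
      rw [sq_sqrt pi_pos.le]

lemma abs_besselJ_natCast_le (n : ℕ) {x : ℝ} (hx : 0 ≤ x) :
    |besselJ n x| ≤ x ^ n / (2 * n - 1)‼ := by
  have h := abs_besselJ_le (Nat.cast_nonneg n) hx
  rw [rpow_natCast, Gamma_nat_add_half, div_pow, div_div_eq_mul_div] at h
  convert h using 1
  field_simp

lemma four_pi_pow_div_doubleFactorial_succ_le {n : ℕ} (hn : 6 ≤ n) :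
    (4 * π) ^ (n + 1) / (2 * (n + 1) - 1 : ℕ)‼ ≤ (4 * π) ^ n / (2 * n - 1 : ℕ)‼ := by
  have hrec : ((2 * (n + 1) - 1 : ℕ)‼ : ℝ) = (2 * n + 1) * (2 * n - 1 : ℕ)‼ := by
    rw [show 2 * (n + 1) - 1 = (2 * n - 1) + 2 by omega, Nat.doubleFactorial_add_two]
    push_cast [show 1 ≤ 2 * n by omega]
    ring
  have h4π : 4 * π ≤ 2 * n + 1 := by
    have : (6 : ℝ) ≤ n := by exact_mod_cast hn
    linarith [pi_lt_d2]
  rw [hrec, pow_succ, mul_comm (2 * (n : ℝ) + 1), ← div_mul_div_comm]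
  exact mul_le_of_le_one_right (by positivity) ((div_le_one (by positivity)).2 h4π)

lemma four_pi_pow_div_doubleFactorial_le {n : ℕ} (hn : 18 ≤ n) :
    (4 * π) ^ n / (2 * n - 1 : ℕ)‼ ≤ 0.276 := by
  induction n, hn using Nat.le_induction with
  | base =>
    rw [show (35 : ℕ)‼ = 221643095476699771875 from rfl, div_le_iff₀ (by norm_num)]
    calc (4 * π) ^ 18 ≤ (4 * 3.1416) ^ 18 := by gcongr; linarith [pi_lt_d4]
      _ ≤ _ := by norm_num
  | succ n hn ih => exact (four_pi_pow_div_doubleFactorial_succ_le (by omega)).trans ih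

lemma abs_besselJ_four_pi_div_le {k : ℕ} (hk : 19 ≤ k) {x : ℝ} (hx : 1 ≤ x) :
    |besselJ ((k : ℝ) - 1) (4 * π / x)| ≤ 0.276 / x ^ 18 := by
  obtain ⟨n, rfl⟩ : ∃ n, k = n + 1 := ⟨k - 1, by omega⟩
  have hx0 : 0 < x := by linarith
  rw [Nat.cast_succ, add_sub_cancel_right]
  calc |besselJ n (4 * π / x)| ≤ (4 * π / x) ^ n / (2 * n - 1 : ℕ)‼ :=
        abs_besselJ_natCast_le n (by positivity)
    _ = (4 * π) ^ n / (2 * n - 1 : ℕ)‼ / x ^ n := by rw [div_pow, div_right_comm]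
    _ ≤ 0.276 / x ^ 18 := by
      gcongr
      · exact four_pi_pow_div_doubleFactorial_le (by omega)
      · omega

lemma tsum_one_div_nat_pow_le {p : ℕ} (hp : 2 ≤ p) :
    ∑' n : ℕ, 1 / (n : ℝ) ^ p ≤ 1 + 1 / 2 ^ (p - 2) := by
  have hzeta : HasSum (fun n : ℕ => 1 / ((n + 2 : ℕ) : ℝ) ^ 2) (π ^ 2 / 6 - 1) := by
    have := (hasSum_nat_add_iff' 2).2 hasSum_zeta_two
    rwa [Finset.sum_range_succ, Finset.sum_range_one, Nat.cast_zero, Nat.cast_one,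
      zero_pow two_ne_zero, div_zero, one_pow, div_one, zero_add] at this
  have hterm (n : ℕ) :
      1 / ((n + 2 : ℕ) : ℝ) ^ p ≤ 1 / 2 ^ (p - 2) * (1 / ((n + 2 : ℕ) : ℝ) ^ 2) := by
    rw [div_mul_div_comm, one_mul, ← Nat.sub_add_cancel hp, pow_add, Nat.add_sub_cancel]
    gcongr
    push_cast
    linarith [n.cast_nonneg (α := ℝ)]
  have hπ : π ^ 2 / 6 - 1 ≤ 1 := by nlinarith [pi_lt_d2, pi_pos]
  rw [← (summable_one_div_nat_pow.2 (by omega)).sum_add_tsum_nat_add 2, Finset.sum_range_succ,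
    Finset.sum_range_one]
  simp only [Nat.cast_zero, Nat.cast_one, zero_pow (show p ≠ 0 by omega), one_pow, div_zero,
    div_one, zero_add]
  refine add_le_add_right ?_ 1
  calc ∑' n : ℕ, 1 / ((n + 2 : ℕ) : ℝ) ^ p
      ≤ ∑' n : ℕ, 1 / 2 ^ (p - 2) * (1 / ((n + 2 : ℕ) : ℝ) ^ 2) :=
        Summable.tsum_le_tsum hterm ((summable_one_div_nat_pow.2 (by omega)).comp_injective
          (add_left_injective 2)) (hzeta.summable.mul_left _)
    _ = 1 / 2 ^ (p - 2) * (π ^ 2 / 6 - 1) := by rw [tsum_mul_left, hzeta.tsum_eq]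
    _ ≤ 1 / 2 ^ (p - 2) := mul_le_of_le_one_right (by positivity) hπ

lemma tsum_le_of_le_div_nat_pow {ι : Type*} {f : ι → ℝ} {C : ℝ} {p : ℕ} (e : ι → ℕ)
    (he : Function.Injective e) (hp : 2 ≤ p) (hC : 0 ≤ C) (hf0 : ∀ i, 0 ≤ f i)
    (hf : ∀ i, f i ≤ C / (e i : ℝ) ^ p) :
    ∑' i, f i ≤ C * (1 + 1 / 2 ^ (p - 2)) := by
  have hg : Summable fun n : ℕ => C * (1 / (n : ℝ) ^ p) :=
    (summable_one_div_nat_pow.2 (by omega)).mul_left C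
  have hfg (i : ι) : f i ≤ C * (1 / (e i : ℝ) ^ p) := (hf i).trans_eq (mul_one_div _ _).symm
  calc ∑' i, f i ≤ ∑' n : ℕ, C * (1 / (n : ℝ) ^ p) :=
        Summable.tsum_le_tsum_of_inj e he (fun _ _ => by positivity) hfg
          ((hg.comp_injective he).of_nonneg_of_le hf0 hfg) hg
    _ = C * ∑' n : ℕ, 1 / (n : ℝ) ^ p := tsum_mul_left
    _ ≤ C * (1 + 1 / 2 ^ (p - 2)) := by gcongr; exact tsum_one_div_nat_pow_le hp

lemma Psi1_le {k : ℕ} (hk : 19 ≤ k) (D : ℕ) :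
    Psi1 k D ≤ 2 * π * (D : ℝ) ^ (-(1 / 2) : ℝ) * (0.276 * (1 + 1 / 2 ^ 15)) := by
  unfold Psi1
  gcongr
  refine tsum_le_of_le_div_nat_pow (p := 17) Subtype.val Subtype.val_injective (by norm_num)
    (by norm_num) (fun _ => by positivity) fun ⟨ℓ, hℓ, _⟩ => ?_
  have hℓ1 : (1 : ℝ) ≤ ℓ := by exact_mod_cast hℓ
  calc (ℓ : ℝ) ^ (-(1 / 2) : ℝ) * (ℓ.divisors.card : ℝ) * |besselJ (k - 1) (4 * π / ℓ)|
      ≤ 1 * ℓ * (0.276 / (ℓ : ℝ) ^ 18) := by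
        gcongr
        · exact rpow_le_one_of_one_le_of_nonpos hℓ1 (by norm_num)
        · exact_mod_cast ℓ.card_divisors_le_self
        · exact abs_besselJ_four_pi_div_le hk hℓ1
    _ = 0.276 / (ℓ : ℝ) ^ 17 := by field_simp

lemma Psi2_le {k D : ℕ} (hk : 19 ≤ k) (hD : 0 < D) :
    Psi2 k D ≤ 2 * π * (0.552 / (D : ℝ) ^ 16 * (1 + 1 / 2 ^ 15)) := by
  unfold Psi2
  gcongr
  refine tsum_le_of_le_div_nat_pow (p := 17) PNat.val PNat.coe_injective (by norm_num)
    (by positivity) (fun _ => by positivity) fun ⟨m, hm⟩ => ?_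
  have hD1 : (1 : ℝ) ≤ D := by exact_mod_cast hD
  have hDm : (1 : ℝ) ≤ D * m := one_le_mul_of_one_le_of_one_le hD1 (by exact_mod_cast hm)
  have hsqrt : √(D : ℝ) ≤ D := sqrt_le_self_iff.2 (.inr hD1)
  calc ((D : ℝ) * m) ^ (-(1 / 2) : ℝ) *
        (√(D : ℝ) * ((D * m).divisors.card : ℝ) + ((D ^ 2 * m).divisors.card : ℝ)) *
        |besselJ (k - 1) (4 * π / (D * m))|
      ≤ 1 * (D * (D * m) + D ^ 2 * m) * (0.276 / ((D : ℝ) * m) ^ 18) := by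
        gcongr
        · exact rpow_le_one_of_one_le_of_nonpos hDm (by norm_num)
        · exact_mod_cast (D * m).card_divisors_le_self
        · exact_mod_cast (D ^ 2 * m).card_divisors_le_self
        · exact abs_besselJ_four_pi_div_le hk hDm
    _ = 0.552 / (D : ℝ) ^ 16 / (m : ℝ) ^ 17 := by field_simp; ring

theorem Psi_lt_of_19_le_general (k D : ℕ) (hk : 19 ≤ k) (hD7 : 7 ≤ D) :
    Psi1 k D < 0.67 ∧ Psi2 k D < 0.1 := by
  have hD : (7 : ℝ) ≤ D := by exact_mod_cast hD7
  have hπ : 2 * π < 6.2832 := by linarith [pi_lt_d4]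
  constructor
  · have hsqrt : (2.645 : ℝ) ≤ √(D : ℝ) :=
      (le_sqrt (by norm_num) (by linarith)).2 (by linarith)
    have hrpow : (D : ℝ) ^ (-(1 / 2) : ℝ) = (√(D : ℝ))⁻¹ := by
      rw [rpow_neg (by positivity), sqrt_eq_rpow]
    calc Psi1 k D ≤ 2 * π * (√(D : ℝ))⁻¹ * (0.276 * (1 + 1 / 2 ^ 15)) :=
          hrpow ▸ Psi1_le hk D
      _ ≤ 6.2832 * 2.645⁻¹ * (0.276 * (1 + 1 / 2 ^ 15)) := by gcongr
      _ < 0.67 := by norm_num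
  · have hD16 : (7 : ℝ) ^ 16 ≤ (D : ℝ) ^ 16 := by gcongr
    calc Psi2 k D ≤ 2 * π * (0.552 / (D : ℝ) ^ 16 * (1 + 1 / 2 ^ 15)) :=
          Psi2_le hk (by omega)
      _ ≤ 6.2832 * (0.552 / 7 ^ 16 * (1 + 1 / 2 ^ 15)) := by gcongr
      _ < 0.1 := by norm_num

/-- For every odd integer `k ≥ 19` and prime `D ≥ 7`:
`Ψ_k^1(D) < 0.67` and `Ψ_k^2(D) < 0.1`. -/
theorem Psi_lt_of_19_le (k D : ℕ) (hk : 19 ≤ k) (hkodd : Odd k)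
    (hD : D.Prime) (hD7 : 7 ≤ D) :
    Psi1 k D < 0.67 ∧ Psi2 k D < 0.1 :=
  Psi_lt_of_19_le_general k D hk hD7
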